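/- Let K ⊂ R^n be a smooth convex body (every boundary point has a unique outer unit normal) and L any convex body in R^n, and define K_t := K + tL for t ≥ 0 and K_t := K ⊖ (-t)L for t < 0 (assumed nonempty for small |t|). Then (h_{K_t} - h_K)/t converges to h_L uniformly on S^{n-1} as t → 0; in particular, the map t ↦ h_{K_t}(u) is differentiable at t = 0 with derivative h_L(u), uniformly in u. -/

import Mathlib

open Set Pointwise Filter
open scoped Topology

noncomputable def suppFn {n : ℕ} (K : Set (EuclideanSpace ℝ (Fin n)))
    (u : EuclideanSpace ℝ (Fin n)) : ℝ :=
  sSup ((fun x => (inner ℝ x u : ℝ)) '' K)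

def minkDiff {n : ℕ} (K L : Set (EuclideanSpace ℝ (Fin n))) :
    Set (EuclideanSpace ℝ (Fin n)) :=
  {x | ∀ y ∈ L, y + x ∈ K}

/-!
For `t > 0` the support function is additive: `h_{K + tL} = h_K + t h_L`. For `t = -s < 0` one
always has `h_{K ⊖ sL} ≤ h_K - s h_L`. Conversely, let `x ∈ K` and `y ∈ L` maximize `⟪·, u⟫`;
the point `x - s y - s ε u` lies in `K ⊖ sL` as soon as `K` contains `x + w` for every short `w`
with `⟪w, u⟫ ≤ -δ ‖w‖`, where `δ` depends only on `ε` and the size of `L`. Smoothness of `K` gives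
such an inner cone at every support point, uniformly in `u`: otherwise compactness produces a
boundary point with two outer normals at distance at least `δ`, namely the limit of the `u`'s and
the limit of the normals of hyperplanes separating the points `x + w ∉ K` from `K`.
-/

open scoped RealInnerProductSpace

section InnerCone

variable {E : Type*} [NormedAddCommGroup E] [InnerProductSpace ℝ E]

theorem mem_frontier_of_isMaxOn_inner {K : Set E} {x u : E} (hu : u ≠ 0) (hx : x ∈ K)
    (hmax : IsMaxOn (fun y => ⟪y, u⟫) K x) : x ∈ frontier K := by
  refine ⟨subset_closure hx, fun hint => hu ?_⟩
  have hderiv : HasFDerivAt (fun y => ⟪y, u⟫) (innerSL ℝ u) x := by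
    convert (innerSL ℝ u).hasFDerivAt using 1
    exact funext fun y => real_inner_comm _ _
  have h0 := (hmax.isLocalMax (mem_interior_iff_mem_nhds.1 hint)).hasFDerivAt_eq_zero hderiv
  simpa using DFunLike.congr_fun h0 u

theorem isMaxOn_inner_of_tendsto {ι : Type*} {l : Filter ι} [l.NeBot] {K : Set E}
    {x u : ι → E} {x₀ u₀ : E} (hx : Tendsto x l (𝓝 x₀)) (hu : Tendsto u l (𝓝 u₀))
    (hmax : ∀ i, IsMaxOn (fun y => ⟪y, u i⟫) K (x i)) :
    IsMaxOn (fun y => ⟪y, u₀⟫) K x₀ :=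
  isMaxOn_iff.2 fun a ha => le_of_tendsto_of_tendsto' (tendsto_const_nhds.inner hu)
    (hx.inner hu) fun i => isMaxOn_iff.1 (hmax i) a ha

theorem exists_norm_eq_one_inner_lt_of_notMem [CompleteSpace E] {K : Set E}
    (hconv : Convex ℝ K) (hclosed : IsClosed K) (hne : K.Nonempty) {q : E} (hq : q ∉ K) :
    ∃ ν : E, ‖ν‖ = 1 ∧ ∀ a ∈ K, ⟪a, ν⟫ < ⟪q, ν⟫ := by
  obtain ⟨f, c, hfK, hfq⟩ := geometric_hahn_banach_closed_point hconv hclosed hq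
  set g := (InnerProductSpace.toDual ℝ E).symm f
  have hg : ∀ v, ⟪v, g⟫ = f v := fun v => by
    rw [real_inner_comm]; exact InnerProductSpace.toDual_symm_apply
  obtain ⟨a₀, ha₀⟩ := hne
  have hg0 : 0 < ‖g‖ := norm_pos_iff.2 fun h0 => by
    have := (hfK a₀ ha₀).trans hfq
    rw [← hg, ← hg, h0, inner_zero_right, inner_zero_right] at this
    exact this.false
  refine ⟨‖g‖⁻¹ • g, by rw [norm_smul, norm_inv, norm_norm, inv_mul_cancel₀ hg0.ne'],
    fun a ha => ?_⟩
  rw [real_inner_smul_right, real_inner_smul_right, hg, hg]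
  exact mul_lt_mul_of_pos_left ((hfK a ha).trans hfq) (inv_pos.2 hg0)

theorem lt_norm_sub_of_inner_le_neg_mul_norm {u ν w : E} {δ : ℝ}
    (hwu : ⟪w, u⟫ ≤ -δ * ‖w‖) (hwν : 0 < ⟪w, ν⟫) : δ < ‖ν - u‖ := by
  have : ‖w‖ * δ < ‖w‖ * ‖ν - u‖ := calc
    ‖w‖ * δ < ⟪w, ν⟫ - ⟪w, u⟫ := by linarith
    _ = ⟪w, ν - u⟫ := (inner_sub_right _ _ _).symm
    _ ≤ ‖w‖ * ‖ν - u‖ := real_inner_le_norm _ _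
  exact lt_of_mul_lt_mul_left this (norm_nonneg w)

def HasUniqueOuterNormals (K : Set E) : Prop :=
  ∀ x ∈ frontier K, ∃! u : Metric.sphere (0 : E) 1, IsMaxOn (fun y => ⟪y, (u : E)⟫) K x

theorem HasUniqueOuterNormals.exists_add_mem [ProperSpace E] {K : Set E}
    (hsmooth : HasUniqueOuterNormals K) (hconv : Convex ℝ K) (hcomp : IsCompact K)
    {δ : ℝ} (hδ : 0 < δ) :
    ∃ r > 0, ∀ u x w : E, ‖u‖ = 1 → x ∈ K → IsMaxOn (fun y => ⟪y, u⟫) K x →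
      ‖w‖ < r → ⟪w, u⟫ ≤ -δ * ‖w‖ → x + w ∈ K := by
  by_contra! h
  choose u x w hu hxK hmax hw hwu hout using fun k : ℕ => h (1 / (k + 1)) (by positivity)
  choose ν hν hsep using fun k =>
    exists_norm_eq_one_inner_lt_of_notMem hconv hcomp.isClosed ⟨_, hxK k⟩ (hout k)
  have hgap : ∀ k, δ < ‖ν k - u k‖ := fun k =>
    lt_norm_sub_of_inner_le_neg_mul_norm (hwu k) <| by
      have := hsep k (x k) (hxK k)
      rwa [inner_add_left, lt_add_iff_pos_right] at this
  have hw_lim : Tendsto w atTop (𝓝 0) :=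
    squeeze_zero_norm (fun k => (hw k).le) tendsto_one_div_add_atTop_nhds_zero_nat
  have hmem : ∀ k, (u k, x k, ν k) ∈ Metric.sphere (0 : E) 1 ×ˢ K ×ˢ Metric.sphere (0 : E) 1 :=
    fun k => ⟨mem_sphere_zero_iff_norm.2 (hu k), hxK k, mem_sphere_zero_iff_norm.2 (hν k)⟩
  obtain ⟨⟨u₀, x₀, ν₀⟩, ⟨hu₀, hx₀, hν₀⟩, φ, hφ, hlim⟩ :=
    ((isCompact_sphere _ _).prod (hcomp.prod (isCompact_sphere _ _))).tendsto_subseq hmem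
  have hu_lim : Tendsto (u ∘ φ) atTop (𝓝 u₀) := (continuous_fst.tendsto _).comp hlim
  have hx_lim : Tendsto (x ∘ φ) atTop (𝓝 x₀) :=
    ((continuous_fst.comp continuous_snd).tendsto _).comp hlim
  have hν_lim : Tendsto (ν ∘ φ) atTop (𝓝 ν₀) :=
    ((continuous_snd.comp continuous_snd).tendsto _).comp hlim
  have hmax_u : IsMaxOn (fun y => ⟪y, u₀⟫) K x₀ :=
    isMaxOn_inner_of_tendsto hx_lim hu_lim fun k => hmax (φ k)
  have hmax_ν : IsMaxOn (fun y => ⟪y, ν₀⟫) K x₀ := by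
    have hq_lim : Tendsto (fun k => x (φ k) + w (φ k)) atTop (𝓝 x₀) := by
      simpa using hx_lim.add (hw_lim.comp hφ.tendsto_atTop)
    exact isMaxOn_inner_of_tendsto hq_lim hν_lim fun k =>
      isMaxOn_iff.2 fun a ha => (hsep (φ k) a ha).le
  have hfr : x₀ ∈ frontier K :=
    mem_frontier_of_isMaxOn_inner (ne_zero_of_mem_unit_sphere ⟨u₀, hu₀⟩) hx₀ hmax_u
  have heq : u₀ = ν₀ := congrArg Subtype.val
    ((hsmooth x₀ hfr).unique (y₁ := ⟨u₀, hu₀⟩) (y₂ := ⟨ν₀, hν₀⟩) hmax_u hmax_ν)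
  have : δ ≤ ‖ν₀ - u₀‖ := ge_of_tendsto' (hν_lim.sub hu_lim).norm fun k => (hgap (φ k)).le
  rw [heq, sub_self, norm_zero] at this
  exact this.not_gt hδ

end InnerCone

theorem TendstoUniformlyOn.sup {ι α β : Type*} [UniformSpace β] {F : ι → α → β} {f : α → β}
    {p p' : Filter ι} {s : Set α} (h : TendstoUniformlyOn F f p s)
    (h' : TendstoUniformlyOn F f p' s) : TendstoUniformlyOn F f (p ⊔ p') s :=
  fun U hU => eventually_sup.2 ⟨h U hU, h' U hU⟩

theorem tendstoUniformlyOn_of_eventually_eqOn {ι α β : Type*} [UniformSpace β]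
    {F : ι → α → β} {f : α → β} {p : Filter ι} {s : Set α} (h : ∀ᶠ i in p, EqOn (F i) f s) :
    TendstoUniformlyOn F f p s :=
  fun _ hU => h.mono fun _ hi _ hx => hi hx ▸ refl_mem_uniformity hU

section SupportFunction

variable {n : ℕ} {K L : Set (EuclideanSpace ℝ (Fin n))} {u x : EuclideanSpace ℝ (Fin n)}

theorem inner_le_suppFn {c : ℝ} (hc : ∀ y ∈ K, ⟪y, u⟫ ≤ c) (hx : x ∈ K) :
    ⟪x, u⟫ ≤ suppFn K u :=
  le_csSup ⟨c, forall_mem_image.2 hc⟩ (mem_image_of_mem _ hx)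

theorem suppFn_le {c : ℝ} (hK : K.Nonempty) (hc : ∀ y ∈ K, ⟪y, u⟫ ≤ c) : suppFn K u ≤ c :=
  csSup_le (hK.image _) (forall_mem_image.2 hc)

theorem suppFn_eq_inner_of_isMaxOn (hx : x ∈ K) (hmax : IsMaxOn (fun y => ⟪y, u⟫) K x) :
    suppFn K u = ⟪x, u⟫ :=
  le_antisymm (suppFn_le ⟨x, hx⟩ (isMaxOn_iff.1 hmax)) (inner_le_suppFn (isMaxOn_iff.1 hmax) hx)

theorem IsCompact.exists_suppFn_eq_inner (hK : IsCompact K) (hne : K.Nonempty)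
    (u : EuclideanSpace ℝ (Fin n)) :
    ∃ x ∈ K, IsMaxOn (fun y => ⟪y, u⟫) K x ∧ suppFn K u = ⟪x, u⟫ := by
  obtain ⟨x, hx, hmax⟩ := hK.exists_isMaxOn (f := fun y => ⟪y, u⟫) hne
    (continuous_id.inner continuous_const).continuousOn
  exact ⟨x, hx, hmax, suppFn_eq_inner_of_isMaxOn hx hmax⟩

theorem suppFn_add_smul (hK : IsCompact K) (hKne : K.Nonempty) (hL : IsCompact L)
    (hLne : L.Nonempty) {t : ℝ} (ht : 0 ≤ t) (u : EuclideanSpace ℝ (Fin n)) :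
    suppFn (K + t • L) u = suppFn K u + t * suppFn L u := by
  obtain ⟨x, hx, hxmax, hxK⟩ := hK.exists_suppFn_eq_inner hKne u
  obtain ⟨y, hy, hymax, hyL⟩ := hL.exists_suppFn_eq_inner hLne u
  have hmax : IsMaxOn (fun z => ⟪z, u⟫) (K + t • L) (x + t • y) := by
    refine isMaxOn_iff.2 ?_
    rintro _ ⟨a, ha, _, ⟨l, hl, rfl⟩, rfl⟩
    simp only [inner_add_left, real_inner_smul_left]
    gcongr
    exacts [isMaxOn_iff.1 hxmax a ha, isMaxOn_iff.1 hymax l hl]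
  rw [suppFn_eq_inner_of_isMaxOn (add_mem_add hx (smul_mem_smul_set hy)) hmax, hxK, hyL,
    inner_add_left, real_inner_smul_left]

theorem inner_le_of_mem_minkDiff_smul (hK : IsCompact K) (hL : IsCompact L) (hLne : L.Nonempty)
    {s : ℝ} {z : EuclideanSpace ℝ (Fin n)} (hz : z ∈ minkDiff K (s • L)) :
    ⟪z, u⟫ ≤ suppFn K u - s * suppFn L u := by
  obtain ⟨y, hy, -, hyL⟩ := hL.exists_suppFn_eq_inner hLne u
  have hyz : s • y + z ∈ K := hz _ (smul_mem_smul_set hy)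
  obtain ⟨x, -, hxmax, hxK⟩ := hK.exists_suppFn_eq_inner ⟨_, hyz⟩ u
  have := isMaxOn_iff.1 hxmax _ hyz
  simp only [inner_add_left, real_inner_smul_left] at this
  rw [hxK, hyL]
  linarith

theorem exists_mem_minkDiff_smul_inner_eq (hKconv : Convex ℝ K) (hKcomp : IsCompact K)
    (hKne : K.Nonempty) (hsmooth : HasUniqueOuterNormals K) (hLcomp : IsCompact L)
    (hLne : L.Nonempty) {ε : ℝ} (hε : 0 < ε) :
    ∃ s₀ > 0, ∀ s ∈ Ioo 0 s₀, ∀ u : EuclideanSpace ℝ (Fin n), ‖u‖ = 1 →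
      ∃ z ∈ minkDiff K (s • L), ⟪z, u⟫ = suppFn K u - s * suppFn L u - s * ε := by
  obtain ⟨M, hM⟩ := hLcomp.isBounded.exists_norm_le
  have hM0 : 0 ≤ M := (norm_nonneg _).trans (hM _ hLne.some_mem)
  set C := 2 * M + ε
  have hC : 0 < C := by positivity
  obtain ⟨r, hr, hcone⟩ := hsmooth.exists_add_mem hKconv hKcomp (div_pos hε hC)
  refine ⟨r / C, div_pos hr hC, fun s ⟨hs0, hs⟩ u hu => ?_⟩
  obtain ⟨x, hx, hxmax, hxK⟩ := hKcomp.exists_suppFn_eq_inner hKne u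
  obtain ⟨y, hy, hymax, hyL⟩ := hLcomp.exists_suppFn_eq_inner hLne u
  have huu : ⟪u, u⟫ = 1 := by rw [real_inner_self_eq_norm_sq, hu, one_pow]
  refine ⟨x - s • y - (s * ε) • u, ?_, ?_⟩
  · rintro _ ⟨l, hl, rfl⟩
    set w := s • (l - y - ε • u)
    have hw_norm : ‖w‖ ≤ s * C := by
      rw [norm_smul, Real.norm_of_nonneg hs0.le]
      gcongr
      calc ‖l - y - ε • u‖ ≤ ‖l‖ + ‖y‖ + ‖ε • u‖ := norm_sub_le_of_le (norm_sub_le _ _) le_rfl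
        _ ≤ C := by rw [norm_smul, hu, Real.norm_of_nonneg hε.le]; linarith [hM l hl, hM y hy]
    have hw_inner : ⟪w, u⟫ ≤ -(ε / C) * ‖w‖ := calc
      ⟪w, u⟫ = s * (⟪l, u⟫ - ⟪y, u⟫ - ε) := by
        simp only [w, real_inner_smul_left, inner_sub_left, huu, mul_one]
      _ ≤ s * -ε := by gcongr; linarith [isMaxOn_iff.1 hymax l hl]
      _ = -(ε / C) * (s * C) := by field_simp
      _ ≤ -(ε / C) * ‖w‖ := mul_le_mul_of_nonpos_left hw_norm (neg_nonpos.2 (by positivity))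
    have hw_lt : ‖w‖ < r := hw_norm.trans_lt (by rwa [lt_div_iff₀ hC] at hs)
    convert hcone u x w hu hx hxmax hw_lt hw_inner using 1
    module
  · simp only [inner_sub_left, real_inner_smul_left, huu, hxK, hyL]
    ring

theorem tendstoUniformlyOn_suppFn_minkDiff (hKconv : Convex ℝ K) (hKcomp : IsCompact K)
    (hKne : K.Nonempty) (hsmooth : HasUniqueOuterNormals K) (hLcomp : IsCompact L)
    (hLne : L.Nonempty) :
    TendstoUniformlyOn (fun t u => (suppFn (minkDiff K ((-t) • L)) u - suppFn K u) / t)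
      (suppFn L) (𝓝[<] 0) (Metric.sphere 0 1) := by
  rw [Metric.tendstoUniformlyOn_iff]
  intro ε hε
  obtain ⟨s₀, hs₀, hz⟩ :=
    exists_mem_minkDiff_smul_inner_eq hKconv hKcomp hKne hsmooth hLcomp hLne (half_pos hε)
  filter_upwards [Ioo_mem_nhdsLT (neg_neg_of_pos hs₀)] with t ⟨ht₀, ht⟩ u hu
  rw [mem_sphere_zero_iff_norm] at hu
  obtain ⟨z, hzK, hzu⟩ := hz (-t) ⟨neg_pos.2 ht, by linarith⟩ u hu
  have hupper := suppFn_le ⟨z, hzK⟩ fun y hy =>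
    inner_le_of_mem_minkDiff_smul hKcomp hLcomp hLne (u := u) hy
  have hlower := hzu ▸ inner_le_suppFn
    (fun y hy => inner_le_of_mem_minkDiff_smul hKcomp hLcomp hLne hy) hzK
  have h₁ : suppFn L u ≤ (suppFn (minkDiff K ((-t) • L)) u - suppFn K u) / t := by
    rw [le_div_iff_of_neg ht]; linarith
  have h₂ : (suppFn (minkDiff K ((-t) • L)) u - suppFn K u) / t ≤ suppFn L u + ε / 2 := by
    rw [div_le_iff_of_neg ht]; linarith
  rw [Real.dist_eq, abs_lt]
  constructor <;> linarith

end SupportFunction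

theorem support_derivative_uniform_general (n : ℕ)
    (K L : Set (EuclideanSpace ℝ (Fin n)))
    (hKconv : Convex ℝ K) (hKcomp : IsCompact K) (hKint : (interior K).Nonempty)
    (hLcomp : IsCompact L) (hLne : L.Nonempty)
    (hsmooth : ∀ x ∈ frontier K, ∃! u : Metric.sphere (0 : EuclideanSpace ℝ (Fin n)) 1,
      ∀ y ∈ K, (inner ℝ y ((u : EuclideanSpace ℝ (Fin n))) : ℝ)
        ≤ (inner ℝ x ((u : EuclideanSpace ℝ (Fin n))) : ℝ)) :
    TendstoUniformlyOn
      (fun (t : ℝ) (u : EuclideanSpace ℝ (Fin n)) =>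
        (suppFn (if 0 ≤ t then K + t • L else minkDiff K ((-t) • L)) u - suppFn K u) / t)
      (fun u => suppFn L u) (𝓝[≠] (0 : ℝ))
      (Metric.sphere (0 : EuclideanSpace ℝ (Fin n)) 1) := by
  have hKne : K.Nonempty := hKint.mono interior_subset
  rw [← nhdsLT_sup_nhdsGT]
  refine TendstoUniformlyOn.sup ?_ (tendstoUniformlyOn_of_eventually_eqOn ?_)
  · refine (tendstoUniformlyOn_suppFn_minkDiff hKconv hKcomp hKne hsmooth hLcomp hLne).congr ?_
    filter_upwards [self_mem_nhdsWithin] with t (ht : t < 0) u _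
    rw [if_neg ht.not_ge]
  · filter_upwards [self_mem_nhdsWithin] with t (ht : 0 < t) u _
    simp only [if_pos ht.le, suppFn_add_smul hKcomp hKne hLcomp hLne ht.le, add_sub_cancel_left,
      mul_div_cancel_left₀ _ ht.ne']

/-- Let `K ⊂ ℝⁿ` be a smooth convex body (every boundary point has a unique outer
unit normal) with nonempty interior, and `L` any convex body.  Set `K_t := K + tL` for `t ≥ 0`
and `K_t := K ⊖ (-t)L` for `t < 0` (nonempty for small `|t|`).  Then `(h_{K_t} - h_K)/t → h_L`
uniformly on `S^{n-1}` as `t → 0`. -/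
theorem support_derivative_uniform (n : ℕ)
    (K L : Set (EuclideanSpace ℝ (Fin n)))
    (hKconv : Convex ℝ K) (hKcomp : IsCompact K) (hKint : (interior K).Nonempty)
    (hLconv : Convex ℝ L) (hLcomp : IsCompact L) (hLne : L.Nonempty)
    (hsmooth : ∀ x ∈ frontier K, ∃! u : Metric.sphere (0 : EuclideanSpace ℝ (Fin n)) 1,
      ∀ y ∈ K, (inner ℝ y ((u : EuclideanSpace ℝ (Fin n))) : ℝ)
        ≤ (inner ℝ x ((u : EuclideanSpace ℝ (Fin n))) : ℝ))
    (hne : ∃ ε : ℝ, 0 < ε ∧ ∀ t : ℝ, -ε < t → t < 0 → (minkDiff K ((-t) • L)).Nonempty) :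
    TendstoUniformlyOn
      (fun (t : ℝ) (u : EuclideanSpace ℝ (Fin n)) =>
        (suppFn (if 0 ≤ t then K + t • L else minkDiff K ((-t) • L)) u - suppFn K u) / t)
      (fun u => suppFn L u) (𝓝[≠] (0 : ℝ))
      (Metric.sphere (0 : EuclideanSpace ℝ (Fin n)) 1) :=
  support_derivative_uniform_general n K L hKconv hKcomp hKint hLcomp hLne hsmooth
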